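/- arXiv:1603.04972 — 3 statements merged into one kernel-verified Lean document; each statement's English description precedes it below -/
import Mathlib

section
/- Let {P_i : i ∈ I} be posets, U an ultrafilter on I, u ∈ U, and for each i ∈ u let γ_i be an (α,β)-filter of P_i (with α, β ≤ ω). Then Γ = {[x] ∈ ∏_U P_i : {i : x(i) ∈ γ_i} ∈ U} is a well-defined (α,β)-filter of the ultraproduct ∏_U P_i. -/
open Cardinal

variable {I : Type} (U : Ultrafilter I) (P : I → Type) [∀ i, PartialOrder (P i)]

/-- The equivalence relation of `U`-almost-everywhere equality on `∀ i, P i`. -/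
def uSetoid : Setoid (∀ i, P i) where
  r x y := {i | x i = y i} ∈ U
  iseqv := by
    refine ⟨fun x => ?_, fun {x y} h => ?_, fun {x y z} h1 h2 => ?_⟩
    · exact Filter.univ_mem' fun i => rfl
    · exact Filter.mem_of_superset h fun i hi => (hi : x i = y i).symm
    · exact Filter.mem_of_superset (Filter.inter_mem h1 h2)
        (fun i hi => (hi.1 : x i = y i).trans hi.2)

/-- The ultraproduct `∏_U P_i`. -/
def UProd : Type := Quotient (uSetoid U P)

/-- The ultraproduct order: `[x] ≤ [y]` iff `{i : x i ≤ y i} ∈ U`. -/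
instance : PartialOrder (UProd U P) where
  le := Quotient.lift₂ (fun x y => {i | x i ≤ y i} ∈ U) (by
    intro x y x' y' hx hy
    have hx : {i | x i = x' i} ∈ U := hx
    have hy : {i | y i = y' i} ∈ U := hy
    refine propext ⟨fun h => ?_, fun h => ?_⟩
    · refine Filter.mem_of_superset (Filter.inter_mem (Filter.inter_mem hx hy) h)
        (fun i hi => ?_)
      have h1 : x i = x' i := hi.1.1
      have h2 : y i = y' i := hi.1.2
      have h3 : x i ≤ y i := hi.2
      show x' i ≤ y' i
      rw [← h1, ← h2]; exact h3
    · refine Filter.mem_of_superset (Filter.inter_mem (Filter.inter_mem hx hy) h)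
        (fun i hi => ?_)
      have h1 : x i = x' i := hi.1.1
      have h2 : y i = y' i := hi.1.2
      have h3 : x' i ≤ y' i := hi.2
      show x i ≤ y i
      rw [h1, h2]; exact h3)
  le_refl := by
    rintro ⟨x⟩
    exact Filter.univ_mem' fun i => le_refl (x i)
  le_trans := by
    rintro ⟨x⟩ ⟨y⟩ ⟨z⟩ h1 h2
    exact Filter.mem_of_superset
      (Filter.inter_mem (h1 : {i | x i ≤ y i} ∈ U) (h2 : {i | y i ≤ z i} ∈ U))
      (fun i hi => le_trans hi.1 hi.2)
  le_antisymm := by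
    rintro ⟨x⟩ ⟨y⟩ h1 h2
    refine Quotient.sound ?_
    exact Filter.mem_of_superset
      (Filter.inter_mem (h1 : {i | x i ≤ y i} ∈ U) (h2 : {i | y i ≤ x i} ∈ U))
      (fun i hi => le_antisymm hi.1 hi.2)

/-- `F` is an `(α,β)`-filter of the poset `Q`. -/
def ABFilter {Q : Type} [PartialOrder Q] (α β : Cardinal) (F : Set Q) : Prop :=
  (∀ p ∈ F, ∀ q, p ≤ q → q ∈ F) ∧
  (∀ X : Set Q, X.Nonempty → X ⊆ F → #X < α → ∀ m, IsGLB X m → m ∈ F) ∧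
  (∀ Y : Set Q, Y.Nonempty → #Y < β → ∀ j, IsLUB Y j → j ∈ F → ∃ y ∈ Y, y ∈ F)

def UProd.mk (x : ∀ i, P i) : UProd U P := Quotient.mk (uSetoid U P) x

lemma uprod_le_def (x y : ∀ i, P i) :
    UProd.mk U P x ≤ UProd.mk U P y ↔ {i | x i ≤ y i} ∈ U :=
  Iff.rfl

lemma ae_isGLB {X : Type} [Finite X] [Nonempty X] (f : X → ∀ i, P i) (m : ∀ i, P i)
    (hm : IsGLB (Set.range fun a => UProd.mk U P (f a)) (UProd.mk U P m)) :
    {i | IsGLB (Set.range fun a => f a i) (m i)} ∈ U := by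
  classical
  have hB : ∀ a : X, {i | m i ≤ f a i} ∈ U := fun a =>
    (uprod_le_def U P m (f a)).mp (hm.1 ⟨a, rfl⟩)
  set Bad : Set I := {i | ∃ q, (∀ a, q ≤ f a i) ∧ ¬ q ≤ m i} with hBadDef
  have hBad : Bad ∉ U := by
    intro hBadU
    obtain ⟨q, hq1, hq2⟩ : ∃ q : ∀ i, P i,
        (∀ i, i ∈ Bad → (∀ a, q i ≤ f a i) ∧ ¬ q i ≤ m i) ∧
        (∀ i, i ∉ Bad → q i = m i) := by
      refine ⟨fun i => if h : i ∈ Bad then h.choose else m i, fun i h => ?_,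
        fun i h => dif_neg h⟩
      simp only [dif_pos h]
      exact h.choose_spec
    have hlb : ∀ a, {i | q i ≤ f a i} ∈ U := by
      intro a
      refine Filter.mem_of_superset (hB a) (fun i hi => ?_)
      by_cases h : i ∈ Bad
      · exact (hq1 i h).1 a
      · show q i ≤ f a i
        rw [hq2 i h]; exact hi
    have hle : {i | q i ≤ m i} ∈ U := by
      refine (uprod_le_def U P q m).mp (hm.2 ?_)
      rintro b ⟨a, rfl⟩
      exact (uprod_le_def U P q (f a)).mpr (hlb a)
    obtain ⟨i, hiB, hile⟩ := Filter.nonempty_of_mem (Filter.inter_mem hBadU hle)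
    exact (hq1 i hiB).2 hile
  have hGood : (⋂ a : X, {i | m i ≤ f a i}) ∩ Badᶜ ∈ U :=
    Filter.inter_mem (Filter.iInter_mem.mpr hB)
      ((Ultrafilter.compl_mem_iff_notMem).mpr hBad)
  refine Filter.mem_of_superset hGood (fun i hi => ?_)
  constructor
  · rintro p ⟨a, rfl⟩
    exact Set.mem_iInter.mp hi.1 a
  · intro q hq
    by_contra hqm
    exact hi.2 ⟨q, fun a => hq ⟨a, rfl⟩, hqm⟩

lemma ae_isLUB {X : Type} [Finite X] [Nonempty X] (f : X → ∀ i, P i) (m : ∀ i, P i)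
    (hm : IsLUB (Set.range fun a => UProd.mk U P (f a)) (UProd.mk U P m)) :
    {i | IsLUB (Set.range fun a => f a i) (m i)} ∈ U := by
  classical
  have hB : ∀ a : X, {i | f a i ≤ m i} ∈ U := fun a =>
    (uprod_le_def U P (f a) m).mp (hm.1 ⟨a, rfl⟩)
  set Bad : Set I := {i | ∃ q, (∀ a, f a i ≤ q) ∧ ¬ m i ≤ q} with hBadDef
  have hBad : Bad ∉ U := by
    intro hBadU
    obtain ⟨q, hq1, hq2⟩ : ∃ q : ∀ i, P i,
        (∀ i, i ∈ Bad → (∀ a, f a i ≤ q i) ∧ ¬ m i ≤ q i) ∧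
        (∀ i, i ∉ Bad → q i = m i) := by
      refine ⟨fun i => if h : i ∈ Bad then h.choose else m i, fun i h => ?_,
        fun i h => dif_neg h⟩
      simp only [dif_pos h]
      exact h.choose_spec
    have hub : ∀ a, {i | f a i ≤ q i} ∈ U := by
      intro a
      refine Filter.mem_of_superset (hB a) (fun i hi => ?_)
      by_cases h : i ∈ Bad
      · exact (hq1 i h).1 a
      · show f a i ≤ q i
        rw [hq2 i h]; exact hi
    have hle : {i | m i ≤ q i} ∈ U := by
      refine (uprod_le_def U P m q).mp (hm.2 ?_)
      rintro b ⟨a, rfl⟩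
      exact (uprod_le_def U P (f a) q).mpr (hub a)
    obtain ⟨i, hiB, hile⟩ := Filter.nonempty_of_mem (Filter.inter_mem hBadU hle)
    exact (hq1 i hiB).2 hile
  have hGood : (⋂ a : X, {i | f a i ≤ m i}) ∩ Badᶜ ∈ U :=
    Filter.inter_mem (Filter.iInter_mem.mpr hB)
      ((Ultrafilter.compl_mem_iff_notMem).mpr hBad)
  refine Filter.mem_of_superset hGood (fun i hi => ?_)
  constructor
  · rintro p ⟨a, rfl⟩
    exact Set.mem_iInter.mp hi.1 a
  · intro q hq
    by_contra hqm
    exact hi.2 ⟨q, fun a => hq ⟨a, rfl⟩, hqm⟩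

/-- If `γ i` is an `(α,β)`-filter of `P i` for each `i` in some `u ∈ U`
(`α, β ≤ ω`), then `Γ = {[x] : {i : x i ∈ γ i} ∈ U}` is a well-defined `(α,β)`-filter
of the ultraproduct `∏_U P_i`. -/
theorem ultraproduct_filter (α β : Cardinal) (hα : α ≤ ℵ₀) (hβ : β ≤ ℵ₀)
    (u : Set I) (hu : u ∈ U) (γ : ∀ i, Set (P i))
    (hγ : ∀ i ∈ u, ABFilter α β (γ i)) :
    (∀ x y : ∀ i, P i, (uSetoid U P).r x y →
      ({i | x i ∈ γ i} ∈ U ↔ {i | y i ∈ γ i} ∈ U)) ∧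
    ABFilter α β
      {a : UProd U P | ∃ x : ∀ i, P i,
        a = Quotient.mk (uSetoid U P) x ∧ {i | x i ∈ γ i} ∈ U} := by
  classical
  constructor
  · -- well-definedness
    intro x y h
    have h : {i | x i = y i} ∈ U := h
    constructor
    · intro hx
      refine Filter.mem_of_superset (Filter.inter_mem h hx) (fun i hi => ?_)
      have hxy : x i = y i := hi.1
      show y i ∈ γ i
      rw [← hxy]; exact hi.2
    · intro hy
      refine Filter.mem_of_superset (Filter.inter_mem h hy) (fun i hi => ?_)
      have hxy : x i = y i := hi.1
      show x i ∈ γ i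
      rw [hxy]; exact hi.2
  refine ⟨?_, ?_, ?_⟩
  · -- upward closed
    rintro p ⟨x, rfl, hx⟩ q hpq
    obtain ⟨y, rfl⟩ := Quotient.exists_rep q
    have hle : {i | x i ≤ y i} ∈ U := (uprod_le_def U P x y).mp hpq
    refine ⟨y, rfl, ?_⟩
    refine Filter.mem_of_superset
      (Filter.inter_mem hu (Filter.inter_mem hx hle)) (fun i hi => ?_)
    exact (hγ i hi.1).1 (x i) hi.2.1 (y i) hi.2.2
  · -- meets
    intro X hXne hXΓ hXcard m hm
    have hXfin : Finite ↥X :=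
      Cardinal.lt_aleph0_iff_finite.mp (hXcard.trans_le hα)
    have hXne' : Nonempty ↥X := hXne.to_subtype
    set f : ↥X → ∀ i, P i := fun a => (hXΓ a.2).choose with hf
    have hfspec : ∀ a : ↥X, a.1 = Quotient.mk (uSetoid U P) (f a) ∧
        {i | f a i ∈ γ i} ∈ U := fun a => (hXΓ a.2).choose_spec
    obtain ⟨mr, hmr⟩ := Quotient.exists_rep m
    have hXeq : X = Set.range fun a : ↥X => Quotient.mk (uSetoid U P) (f a) := by
      have : (fun a : ↥X => Quotient.mk (uSetoid U P) (f a)) = fun a : ↥X => a.1 :=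
        funext fun a => (hfspec a).1.symm
      rw [this]; exact Subtype.range_coe.symm
    have hG : {i | IsGLB (Set.range fun a : ↥X => f a i) (mr i)} ∈ U := by
      rw [hXeq, ← hmr] at hm
      exact ae_isGLB U P f mr hm
    refine ⟨mr, hmr.symm, ?_⟩
    have hA : (⋂ a : ↥X, {i | f a i ∈ γ i}) ∈ U :=
      Filter.iInter_mem.mpr fun a => (hfspec a).2
    refine Filter.mem_of_superset
      (Filter.inter_mem hu (Filter.inter_mem hG hA)) (fun i hi => ?_)
    refine (hγ i hi.1).2.1 (Set.range fun a : ↥X => f a i)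
      (Set.range_nonempty _) ?_ ?_ (mr i) hi.2.1
    · rintro p ⟨a, rfl⟩
      exact Set.mem_iInter.mp hi.2.2 a
    · exact lt_of_le_of_lt Cardinal.mk_range_le hXcard
  · -- joins
    intro Y hYne hYcard j hj hjΓ
    have hYfin : Finite ↥Y :=
      Cardinal.lt_aleph0_iff_finite.mp (hYcard.trans_le hβ)
    have hYne' : Nonempty ↥Y := hYne.to_subtype
    set f : ↥Y → ∀ i, P i := fun a => (Quotient.exists_rep a.1).choose with hf
    have hfspec : ∀ a : ↥Y, Quotient.mk (uSetoid U P) (f a) = a.1 := fun a =>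
      (Quotient.exists_rep a.1).choose_spec
    obtain ⟨xj, hxjeq, hxjU⟩ := hjΓ
    have hYeq : Y = Set.range fun a : ↥Y => Quotient.mk (uSetoid U P) (f a) := by
      have : (fun a : ↥Y => Quotient.mk (uSetoid U P) (f a)) = fun a : ↥Y => a.1 :=
        funext fun a => hfspec a
      rw [this]; exact Subtype.range_coe.symm
    have hG : {i | IsLUB (Set.range fun a : ↥Y => f a i) (xj i)} ∈ U := by
      rw [hYeq, hxjeq] at hj
      exact ae_isLUB U P f xj hj
    have hW : u ∩ ({i | IsLUB (Set.range fun a : ↥Y => f a i) (xj i)}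
        ∩ {i | xj i ∈ γ i}) ∈ U := Filter.inter_mem hu (Filter.inter_mem hG hxjU)
    have hex : ∃ a : ↥Y, {i | f a i ∈ γ i} ∈ U := by
      by_contra hcon
      push_neg at hcon
      have hcompl : (⋂ a : ↥Y, {i | f a i ∈ γ i}ᶜ) ∈ U :=
        Filter.iInter_mem.mpr fun a =>
          (Ultrafilter.compl_mem_iff_notMem).mpr (hcon a)
      obtain ⟨i, hiW, hic⟩ :=
        Filter.nonempty_of_mem (Filter.inter_mem hW hcompl)
      obtain ⟨y, ⟨a, rfl⟩, hy⟩ := (hγ i hiW.1).2.2 (Set.range fun a : ↥Y => f a i)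
        (Set.range_nonempty _) (lt_of_le_of_lt Cardinal.mk_range_le hYcard)
        (xj i) hiW.2.1 hiW.2.2
      exact Set.mem_iInter.mp hic a hy
    obtain ⟨a, ha⟩ := hex
    exact ⟨a.1, a.2, f a, (hfspec a).symm, ha⟩
end

section
/- For 2 < α, β ≤ ω, the class of (α,β)-representable posets is closed under ultraproducts: if each P_i is (α,β)-representable and U is an ultrafilter on I, then ∏_U P_i is (α,β)-representable. -/
open Cardinal

variable {I : Type} (U : Ultrafilter I) (P : I → Type) [∀ i, PartialOrder (P i)]

/-- `h : Q → ℘(X)` is an `(α,β)`-representation. -/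
def IsRep {Q : Type} [PartialOrder Q] {X : Type} (α β : Cardinal)
    (h : Q → Set X) : Prop :=
  (∀ p q : Q, p ≤ q ↔ h p ⊆ h q) ∧
  (∀ S : Set Q, S.Nonempty → #S < α → ∀ m, IsGLB S m → h m = ⋂ x ∈ S, h x) ∧
  (∀ S : Set Q, S.Nonempty → #S < β → ∀ j, IsLUB S j → h j = ⋃ x ∈ S, h x)

section MyAux

private def mkU (x : ∀ i, P i) : UProd U P := Quotient.mk (uSetoid U P) x

private lemma le_mk' (x y : ∀ i, P i) :
    mkU U P x ≤ mkU U P y ↔ {i | x i ≤ y i} ∈ U := Iff.rfl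

private lemma le_out' (q r : UProd U P) :
    q ≤ r ↔ {i | q.out i ≤ r.out i} ∈ U := by
  conv_lhs => rw [← Quotient.out_eq q, ← Quotient.out_eq r]
  exact Iff.rfl

private lemma los_glb (S : Set (UProd U P)) (hfin : S.Finite) (m : UProd U P)
    (hm : IsGLB S m) :
    {i | IsGLB ((fun q : UProd U P => q.out i) '' S) (m.out i)} ∈ U := by
  classical
  haveI := hfin.to_subtype
  have hL : {i | ∀ q ∈ S, m.out i ≤ q.out i} ∈ U := by
    have h1 : (⋂ q : S, {i | m.out i ≤ (q : UProd U P).out i}) ∈ U :=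
      (Filter.iInter_mem).2 fun q => (le_out' U P m q).1 (hm.1 q.2)
    exact Filter.mem_of_superset h1
      (fun i hi q hq => Set.mem_iInter.1 hi ⟨q, hq⟩)
  have hBc : {i | ∃ p : P i, (∀ q ∈ S, p ≤ q.out i) ∧ ¬ p ≤ m.out i}ᶜ ∈ U := by
    by_contra hc
    have hBU : {i | ∃ p : P i, (∀ q ∈ S, p ≤ q.out i) ∧ ¬ p ≤ m.out i} ∈ U :=
      Ultrafilter.compl_notMem_iff.1 hc
    set p : ∀ i, P i := fun i =>
      if h : ∃ p : P i, (∀ q ∈ S, p ≤ q.out i) ∧ ¬ p ≤ m.out i then h.choose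
      else m.out i with hpdef
    have hlb : mkU U P p ∈ lowerBounds S := by
      intro q hq
      conv_rhs => rw [← Quotient.out_eq q]
      refine (le_mk' U P p q.out).2 (Filter.mem_of_superset hBU ?_)
      intro i hi
      have hEi : ∃ p : P i, (∀ q ∈ S, p ≤ q.out i) ∧ ¬ p ≤ m.out i := hi
      show p i ≤ q.out i
      simp only [hpdef]
      rw [dif_pos hEi]
      exact hEi.choose_spec.1 q hq
    have hpm : mkU U P p ≤ m := hm.2 hlb
    have hpm2 : mkU U P p ≤ mkU U P m.out := by
      rw [show mkU U P m.out = m from Quotient.out_eq m]; exact hpm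
    have hmem : {i | p i ≤ m.out i} ∈ U := (le_mk' U P _ _).1 hpm2
    obtain ⟨i, hi1, hi2⟩ := Filter.nonempty_of_mem (Filter.inter_mem hmem hBU)
    have hEi : ∃ p : P i, (∀ q ∈ S, p ≤ q.out i) ∧ ¬ p ≤ m.out i := hi2
    have hpi : p i = hEi.choose := by
      simp only [hpdef]; rw [dif_pos hEi]
    exact hEi.choose_spec.2 (hpi ▸ hi1)
  refine Filter.mem_of_superset (Filter.inter_mem hL hBc) ?_
  rintro i ⟨hi1, hi2⟩
  constructor
  · rintro y ⟨q, hq, rfl⟩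
    exact hi1 q hq
  · intro b hb
    by_contra hbm
    exact hi2 ⟨b, fun q hq => hb ⟨q, hq, rfl⟩, hbm⟩

private lemma los_lub (S : Set (UProd U P)) (hfin : S.Finite) (m : UProd U P)
    (hm : IsLUB S m) :
    {i | IsLUB ((fun q : UProd U P => q.out i) '' S) (m.out i)} ∈ U := by
  classical
  haveI := hfin.to_subtype
  have hL : {i | ∀ q ∈ S, q.out i ≤ m.out i} ∈ U := by
    have h1 : (⋂ q : S, {i | (q : UProd U P).out i ≤ m.out i}) ∈ U :=
      (Filter.iInter_mem).2 fun q => (le_out' U P q m).1 (hm.1 q.2)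
    exact Filter.mem_of_superset h1
      (fun i hi q hq => Set.mem_iInter.1 hi ⟨q, hq⟩)
  have hBc : {i | ∃ p : P i, (∀ q ∈ S, q.out i ≤ p) ∧ ¬ m.out i ≤ p}ᶜ ∈ U := by
    by_contra hc
    have hBU : {i | ∃ p : P i, (∀ q ∈ S, q.out i ≤ p) ∧ ¬ m.out i ≤ p} ∈ U :=
      Ultrafilter.compl_notMem_iff.1 hc
    set p : ∀ i, P i := fun i =>
      if h : ∃ p : P i, (∀ q ∈ S, q.out i ≤ p) ∧ ¬ m.out i ≤ p then h.choose
      else m.out i with hpdef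
    have hub : mkU U P p ∈ upperBounds S := by
      intro q hq
      conv_lhs => rw [← Quotient.out_eq q]
      refine (le_mk' U P q.out p).2 (Filter.mem_of_superset hBU ?_)
      intro i hi
      have hEi : ∃ p : P i, (∀ q ∈ S, q.out i ≤ p) ∧ ¬ m.out i ≤ p := hi
      show q.out i ≤ p i
      simp only [hpdef]
      rw [dif_pos hEi]
      exact hEi.choose_spec.1 q hq
    have hpm : m ≤ mkU U P p := hm.2 hub
    have hpm2 : mkU U P m.out ≤ mkU U P p := by
      rw [show mkU U P m.out = m from Quotient.out_eq m]; exact hpm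
    have hmem : {i | m.out i ≤ p i} ∈ U := (le_mk' U P _ _).1 hpm2
    obtain ⟨i, hi1, hi2⟩ := Filter.nonempty_of_mem (Filter.inter_mem hmem hBU)
    have hEi : ∃ p : P i, (∀ q ∈ S, q.out i ≤ p) ∧ ¬ m.out i ≤ p := hi2
    have hpi : p i = hEi.choose := by
      simp only [hpdef]; rw [dif_pos hEi]
    exact hEi.choose_spec.2 (hpi ▸ hi1)
  refine Filter.mem_of_superset (Filter.inter_mem hL hBc) ?_
  rintro i ⟨hi1, hi2⟩
  constructor
  · rintro y ⟨q, hq, rfl⟩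
    exact hi1 q hq
  · intro b hb
    by_contra hbm
    exact hi2 ⟨b, fun q hq => hb ⟨q, hq, rfl⟩, hbm⟩

private lemma isRep_some {Q X : Type} [PartialOrder Q] {α β : Cardinal}
    {h : Q → Set X} (hh : IsRep α β h) :
    IsRep α β (fun q => (Option.some '' h q : Set (Option X))) := by
  obtain ⟨h1, h2, h3⟩ := hh
  refine ⟨fun p q => ?_, fun S hne hcard m hm => ?_, fun S hne hcard j hj => ?_⟩
  · rw [h1, Set.image_subset_image_iff (Option.some_injective X)]
  · show Option.some '' h m = ⋂ x ∈ S, Option.some '' h x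
    rw [h2 S hne hcard m hm]
    exact Set.InjOn.image_biInter_eq hne
      ((Option.some_injective X).injOn)
  · show Option.some '' h j = ⋃ x ∈ S, Option.some '' h x
    rw [h3 S hne hcard j hj, Set.image_iUnion₂]

end MyAux

/-- For `2 < α, β ≤ ω`, the class of `(α,β)`-representable posets is
closed under ultraproducts. -/
theorem representable_closed_under_ultraproducts (α β : Cardinal)
    (h2α : 2 < α) (h2β : 2 < β) (hα : α ≤ ℵ₀) (hβ : β ≤ ℵ₀)
    (hrep : ∀ i, ∃ (X : Type) (h : P i → Set X), IsRep α β h) :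
    ∃ (X : Type) (h : UProd U P → Set X), IsRep α β h := by
  classical
  choose X h0 hX0 using hrep
  set h : ∀ i, P i → Set (Option (X i)) := fun i p => Option.some '' h0 i p with hdef
  have hX : ∀ i, IsRep α β (h i) := fun i => isRep_some (hX0 i)
  refine ⟨∀ i, Option (X i),
    fun q => {x | {i | x i ∈ h i (q.out i)} ∈ U}, ?_, ?_, ?_⟩
  · -- order embedding
    intro p q
    constructor
    · intro hpq x hx
      have hle : {i | p.out i ≤ q.out i} ∈ U := (le_out' U P p q).1 hpq
      exact Filter.mem_of_superset (Filter.inter_mem hle hx)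
        (fun i hi => ((hX i).1 _ _).1 hi.1 hi.2)
    · intro hsub
      by_contra hpq
      rw [le_out' U P p q] at hpq
      have hB : {i | p.out i ≤ q.out i}ᶜ ∈ U := Ultrafilter.compl_mem_iff_notMem.2 hpq
      have hE : ∀ i ∈ {i | p.out i ≤ q.out i}ᶜ,
          ∃ a : Option (X i), a ∈ h i (p.out i) ∧ a ∉ h i (q.out i) := by
        intro i hi
        have : ¬ (h i (p.out i) ⊆ h i (q.out i)) := fun hc => hi (((hX i).1 _ _).2 hc)
        exact Set.not_subset.1 this
      set x : ∀ i, Option (X i) := fun i =>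
        if hc : ∃ a : Option (X i), a ∈ h i (p.out i) ∧ a ∉ h i (q.out i)
        then hc.choose else none with hxdef
      have hxp : x ∈ {x | {i | x i ∈ h i (p.out i)} ∈ U} := by
        refine Filter.mem_of_superset hB ?_
        intro i hi
        have hc := hE i hi
        show x i ∈ h i (p.out i)
        simp only [hxdef]
        rw [dif_pos hc]
        exact hc.choose_spec.1
      have hxq := hsub hxp
      obtain ⟨i, hi1, hi2⟩ := Filter.nonempty_of_mem (Filter.inter_mem hxq hB)
      have hc := hE i hi2
      have hxi : x i = hc.choose := by simp only [hxdef]; rw [dif_pos hc]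
      exact hc.choose_spec.2 (hxi ▸ hi1)
  · -- meets
    intro S hne hcard m hm
    have hfin : S.Finite := Cardinal.lt_aleph0_iff_set_finite.1 (hcard.trans_le hα)
    haveI := hfin.to_subtype
    have hA := los_glb U P S hfin m hm
    apply Set.Subset.antisymm
    · intro x hx
      refine Set.mem_iInter₂.2 fun q hq => ?_
      have hle : {i | m.out i ≤ q.out i} ∈ U := (le_out' U P m q).1 (hm.1 hq)
      exact Filter.mem_of_superset (Filter.inter_mem hle hx)
        (fun i hi => ((hX i).1 _ _).1 hi.1 hi.2)
    · intro x hx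
      have hL : {i | ∀ q ∈ S, x i ∈ h i (q.out i)} ∈ U := by
        have h1 : (⋂ q : S, {i | x i ∈ h i ((q : UProd U P).out i)}) ∈ U :=
          (Filter.iInter_mem).2 fun q => Set.mem_iInter₂.1 hx q q.2
        exact Filter.mem_of_superset h1
          (fun i hi q hq => Set.mem_iInter.1 hi ⟨q, hq⟩)
      refine Filter.mem_of_superset (Filter.inter_mem hA hL) ?_
      rintro i ⟨hi1, hi2⟩
      have hcardT : #((fun q : UProd U P => q.out i) '' S) < α :=
        lt_of_le_of_lt Cardinal.mk_image_le hcard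
      have := (hX i).2.1 _ (hne.image _) hcardT _ hi1
      show x i ∈ h i (m.out i)
      rw [this]
      refine Set.mem_iInter₂.2 ?_
      rintro y ⟨q, hq, rfl⟩
      exact hi2 q hq
  · -- joins
    intro S hne hcard j hj
    have hfin : S.Finite := Cardinal.lt_aleph0_iff_set_finite.1 (hcard.trans_le hβ)
    haveI := hfin.to_subtype
    have hA := los_lub U P S hfin j hj
    apply Set.Subset.antisymm
    · intro x hx
      have hD : {i | x i ∈ h i (j.out i)} ∈ U := hx
      by_contra hc
      have hnot : ∀ q : S, {i | x i ∈ h i ((q : UProd U P).out i)}ᶜ ∈ U := by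
        intro q
        refine Ultrafilter.compl_mem_iff_notMem.2 fun hmem => ?_
        exact hc (Set.mem_iUnion₂.2 ⟨q, q.2, hmem⟩)
      have hI : (⋂ q : S, {i | x i ∈ h i ((q : UProd U P).out i)}ᶜ) ∈ U :=
        (Filter.iInter_mem).2 hnot
      obtain ⟨i, hi⟩ := Filter.nonempty_of_mem
        (Filter.inter_mem (Filter.inter_mem hA hD) hI)
      obtain ⟨⟨hi1, hi2⟩, hi3⟩ := hi
      have hcardT : #((fun q : UProd U P => q.out i) '' S) < β :=
        lt_of_le_of_lt Cardinal.mk_image_le hcard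
      have heq := (hX i).2.2 _ (hne.image _) hcardT _ hi1
      have hi2' : x i ∈ h i (j.out i) := hi2
      rw [heq] at hi2'
      obtain ⟨y, ⟨q, hq, rfl⟩, hy⟩ := Set.mem_iUnion₂.1 hi2'
      exact Set.mem_iInter.1 hi3 ⟨q, hq⟩ hy
    · refine Set.iUnion₂_subset fun q hq => ?_
      intro x hx
      have hle : {i | q.out i ≤ j.out i} ∈ U := (le_out' U P q j).1 (hj.1 hq)
      exact Filter.mem_of_superset (Filter.inter_mem hle hx)
        (fun i hi => ((hX i).1 _ _).1 hi.1 hi.2)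
end

section
/- Let P be a poset, U an ultrafilter on a set I, and Γ an (α,β)-filter of the ultrapower ∏_U P (α, β ≤ ω). Then γ = {p ∈ P : [p̄] ∈ Γ}, where p̄ is the constant function with value p, is an (α,β)-filter of P. Consequently, if the ultrapower ∏_U P is (α,β)-representable then so is P (closure under ultraroots). -/
open Cardinal

variable {I : Type} (U : Ultrafilter I) (P : I → Type) [∀ i, PartialOrder (P i)]

/-- The diagonal embedding into the ultrapower. -/
def diag (Q : Type) [PartialOrder Q] (p : Q) : UProd U (fun _ : I => Q) :=
  Quotient.mk (uSetoid U (fun _ : I => Q)) (fun _ => p)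

lemma diag_le_diag_iff {Q : Type} [PartialOrder Q] {p q : Q} :
    diag U Q p ≤ diag U Q q ↔ p ≤ q := by
  constructor
  · intro h
    have h' : {i : I | p ≤ q} ∈ U := h
    obtain ⟨i, hi⟩ := Filter.nonempty_of_mem h'
    exact hi
  · intro h
    exact (Filter.univ_mem' fun i => h : {i : I | p ≤ q} ∈ U)

lemma diag_isGLB {Q : Type} [PartialOrder Q] {S : Set Q} (hfin : S.Finite)
    {m : Q} (hm : IsGLB S m) : IsGLB (diag U Q '' S) (diag U Q m) := by
  constructor
  · rintro _ ⟨x, hx, rfl⟩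
    exact (diag_le_diag_iff U).2 (hm.1 hx)
  · rintro ⟨y⟩ hy
    show {i : I | y i ≤ m} ∈ U
    have hmem : (⋂ x ∈ S, {i : I | y i ≤ x}) ∈ U :=
      (Filter.biInter_mem hfin).2 fun x hx => (hy ⟨x, hx, rfl⟩ : {i : I | y i ≤ x} ∈ U)
    exact Filter.mem_of_superset hmem fun i hi =>
      hm.2 fun x hx => Set.mem_iInter₂.1 hi x hx

lemma diag_isLUB {Q : Type} [PartialOrder Q] {S : Set Q} (hfin : S.Finite)
    {j : Q} (hj : IsLUB S j) : IsLUB (diag U Q '' S) (diag U Q j) := by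
  constructor
  · rintro _ ⟨x, hx, rfl⟩
    exact (diag_le_diag_iff U).2 (hj.1 hx)
  · rintro ⟨y⟩ hy
    show {i : I | j ≤ y i} ∈ U
    have hmem : (⋂ x ∈ S, {i : I | x ≤ y i}) ∈ U :=
      (Filter.biInter_mem hfin).2 fun x hx => (hy ⟨x, hx, rfl⟩ : {i : I | x ≤ y i} ∈ U)
    exact Filter.mem_of_superset hmem fun i hi =>
      hj.2 fun x hx => Set.mem_iInter₂.1 hi x hx

/-- If `Γ` is an `(α,β)`-filter of the ultrapower `∏_U P` (`α, β ≤ ω`),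
then `γ = {p : [p̄] ∈ Γ}` (`p̄` the constant function) is an `(α,β)`-filter of `P`.
Consequently, if the ultrapower is `(α,β)`-representable then so is `P`. -/
theorem ultraroot_filter_and_representability (α β : Cardinal)
    (hα : α ≤ ℵ₀) (hβ : β ≤ ℵ₀) (Q : Type) [PartialOrder Q] :
    (∀ Γ : Set (UProd U (fun _ : I => Q)), ABFilter α β Γ →
      ABFilter α β
        {p : Q | Quotient.mk (uSetoid U (fun _ : I => Q)) (fun _ => p) ∈ Γ}) ∧
    ((∃ (X : Type) (h : UProd U (fun _ : I => Q) → Set X), IsRep α β h) →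
      ∃ (X : Type) (h : Q → Set X), IsRep α β h) := by
  constructor
  · rintro Γ ⟨h1, h2, h3⟩
    refine ⟨fun p hp q hpq => ?_, fun X hne hsub hcard m hm => ?_,
      fun Y hne hcard j hj hjΓ => ?_⟩
    · exact h1 _ hp _ ((diag_le_diag_iff U).2 hpq)
    · have hfin : X.Finite := Cardinal.lt_aleph0_iff_set_finite.1 (hcard.trans_le hα)
      exact h2 (diag U Q '' X) (hne.image _)
        (by rintro _ ⟨x, hx, rfl⟩; exact hsub hx)
        (lt_of_le_of_lt Cardinal.mk_image_le hcard) _ (diag_isGLB U hfin hm)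
    · have hfin : Y.Finite := Cardinal.lt_aleph0_iff_set_finite.1 (hcard.trans_le hβ)
      obtain ⟨_, ⟨y, hy, rfl⟩, hyΓ⟩ := h3 (diag U Q '' Y) (hne.image _)
        (lt_of_le_of_lt Cardinal.mk_image_le hcard) _ (diag_isLUB U hfin hj) hjΓ
      exact ⟨y, hy, hyΓ⟩
  · rintro ⟨X, h, hle, hglb, hlub⟩
    refine ⟨X, fun p => h (diag U Q p), ?_, ?_, ?_⟩
    · intro p q
      exact ⟨fun hpq => (hle _ _).1 ((diag_le_diag_iff U).2 hpq),
        fun hpq => (diag_le_diag_iff U).1 ((hle _ _).2 hpq)⟩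
    · intro S hne hcard m hm
      have hfin : S.Finite := Cardinal.lt_aleph0_iff_set_finite.1 (hcard.trans_le hα)
      show h (diag U Q m) = ⋂ x ∈ S, h (diag U Q x)
      rw [hglb (diag U Q '' S) (hne.image _)
        (lt_of_le_of_lt Cardinal.mk_image_le hcard) _ (diag_isGLB U hfin hm),
        Set.biInter_image]
    · intro S hne hcard j hj
      have hfin : S.Finite := Cardinal.lt_aleph0_iff_set_finite.1 (hcard.trans_le hβ)
      show h (diag U Q j) = ⋃ x ∈ S, h (diag U Q x)
      rw [hlub (diag U Q '' S) (hne.image _)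
        (lt_of_le_of_lt Cardinal.mk_image_le hcard) _ (diag_isLUB U hfin hj),
        Set.biUnion_image]
end
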